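/- Let k be a field and R = k[s,t,u,v]/(s², sv, t², tv, u², uv, v² − st − su). Then there is no element x in R with ann(x) = (x). -/

import Mathlib

open MvPolynomial

set_option synthInstance.maxHeartbeats 1000000
set_option maxHeartbeats 1000000

/-- The defining ideal of `R = k[s,t,u,v]/(s², sv, t², tv, u², uv, v² - st - su)`. -/
noncomputable def I14 (k : Type u) [CommRing k] : Ideal (MvPolynomial (Fin 4) k) :=
  Ideal.span {X 0 ^ 2, X 0 * X 3, X 1 ^ 2, X 1 * X 3, X 2 ^ 2, X 2 * X 3,
    X 3 ^ 2 - X 0 * X 1 - X 0 * X 2}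

/-- The ring `R = k[s,t,u,v]/(s², sv, t², tv, u², uv, v² - st - su)`. -/
abbrev R14 (k : Type u) [CommRing k] : Type u := MvPolynomial (Fin 4) k ⧸ I14 k

/-- The annihilator of an element of `R` as an ideal. -/
def annIdeal (R : Type u) [CommRing R] (a : R) : Ideal R :=
  LinearMap.ker (LinearMap.mulLeft R a)

/-
Since `m³ = 0`, an element `x` with `ann(x) = (x)` satisfies `x² = 0`, so `x ∈ m`, and then
`m² ⊆ ann(x) = (x)`. If `x ∈ m²` then `(x) = k·x` cannot contain the 3-dimensional `m²`.
Otherwise write the linear part of `x` as `a s + b t + c u + d v`: the equation `x² = 0`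
reads `2ab + d² = 2ac + d² = 2bc = 0`, which forces `d = 0`. Then `m² ⊆ (x) = k·x + m·x`
means that multiplication by `x` maps `span(s, t, u)` onto `m² = span(st, su, tu)`, but
the matrix of that map has determinant `-2abc = 0`.
All of this is computed in coordinates with respect to the basis `1, s, t, u, v, st, su, tu`.
-/

lemma mem_annIdeal {R : Type*} [CommRing R] {a z : R} : z ∈ annIdeal R a ↔ a * z = 0 := Iff.rfl

lemma annIdeal_eq_span_singleton_map {R S : Type*} [CommRing R] [CommRing S] (e : R ≃+* S)
    {x : R} (h : annIdeal R x = Ideal.span {x}) : annIdeal S (e x) = Ideal.span {e x} := by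
  ext z
  obtain ⟨w, rfl⟩ := e.surjective z
  rw [mem_annIdeal, ← map_mul, map_eq_zero_iff e e.injective, ← mem_annIdeal, h,
    Ideal.mem_span_singleton', Ideal.mem_span_singleton']
  constructor
  · rintro ⟨c, rfl⟩
    exact ⟨e c, (map_mul e c x).symm⟩
  · rintro ⟨c, hc⟩
    exact ⟨e.symm c, e.injective (by rw [map_mul, e.apply_symm_apply, hc])⟩

/-- Coordinates in the basis `1, s, t, u, v, st, su, tu` of `R`; the multiplication below
is that of `R`, where `v² = st + su` and all other monomials of degree at least two outside
the basis vanish. -/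
@[ext] structure R14Model (k : Type*) where
  const : k
  s : k
  t : k
  u : k
  v : k
  st : k
  su : k
  tu : k

namespace R14Model

variable {k : Type*} [CommRing k]

instance : Zero (R14Model k) := ⟨⟨0, 0, 0, 0, 0, 0, 0, 0⟩⟩

instance : One (R14Model k) := ⟨⟨1, 0, 0, 0, 0, 0, 0, 0⟩⟩

instance : Add (R14Model k) :=
  ⟨fun x y => ⟨x.const + y.const, x.s + y.s, x.t + y.t, x.u + y.u, x.v + y.v,
    x.st + y.st, x.su + y.su, x.tu + y.tu⟩⟩

instance : Neg (R14Model k) :=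
  ⟨fun x => ⟨-x.const, -x.s, -x.t, -x.u, -x.v, -x.st, -x.su, -x.tu⟩⟩

instance : Mul (R14Model k) :=
  ⟨fun x y => ⟨x.const * y.const,
    x.const * y.s + x.s * y.const,
    x.const * y.t + x.t * y.const,
    x.const * y.u + x.u * y.const,
    x.const * y.v + x.v * y.const,
    x.const * y.st + x.st * y.const + x.s * y.t + x.t * y.s + x.v * y.v,
    x.const * y.su + x.su * y.const + x.s * y.u + x.u * y.s + x.v * y.v,
    x.const * y.tu + x.tu * y.const + x.t * y.u + x.u * y.t⟩⟩

lemma zero_def : (0 : R14Model k) = ⟨0, 0, 0, 0, 0, 0, 0, 0⟩ := rfl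

lemma one_def : (1 : R14Model k) = ⟨1, 0, 0, 0, 0, 0, 0, 0⟩ := rfl

lemma add_def (x y : R14Model k) : x + y = ⟨x.const + y.const, x.s + y.s, x.t + y.t,
    x.u + y.u, x.v + y.v, x.st + y.st, x.su + y.su, x.tu + y.tu⟩ := rfl

lemma neg_def (x : R14Model k) :
    -x = ⟨-x.const, -x.s, -x.t, -x.u, -x.v, -x.st, -x.su, -x.tu⟩ := rfl

lemma mul_def (x y : R14Model k) : x * y = ⟨x.const * y.const,
    x.const * y.s + x.s * y.const,
    x.const * y.t + x.t * y.const,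
    x.const * y.u + x.u * y.const,
    x.const * y.v + x.v * y.const,
    x.const * y.st + x.st * y.const + x.s * y.t + x.t * y.s + x.v * y.v,
    x.const * y.su + x.su * y.const + x.s * y.u + x.u * y.s + x.v * y.v,
    x.const * y.tu + x.tu * y.const + x.t * y.u + x.u * y.t⟩ := rfl

instance : CommRing (R14Model k) where
  add_assoc x y z := by ext <;> simp only [add_def] <;> ring
  zero_add x := by ext <;> simp only [add_def, zero_def] <;> ring
  add_zero x := by ext <;> simp only [add_def, zero_def] <;> ring
  add_comm x y := by ext <;> simp only [add_def] <;> ring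
  neg_add_cancel x := by ext <;> simp only [add_def, neg_def, zero_def] <;> ring
  mul_assoc x y z := by ext <;> simp only [mul_def] <;> ring
  one_mul x := by ext <;> simp only [mul_def, one_def] <;> ring
  mul_one x := by ext <;> simp only [mul_def, one_def] <;> ring
  left_distrib x y z := by ext <;> simp only [mul_def, add_def] <;> ring
  right_distrib x y z := by ext <;> simp only [mul_def, add_def] <;> ring
  zero_mul x := by ext <;> simp only [mul_def, zero_def] <;> ring
  mul_zero x := by ext <;> simp only [mul_def, zero_def] <;> ring
  mul_comm x y := by ext <;> simp only [mul_def] <;> ring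
  nsmul := nsmulRec
  zsmul := zsmulRec

def constHom : k →+* R14Model k where
  toFun a := ⟨a, 0, 0, 0, 0, 0, 0, 0⟩
  map_one' := rfl
  map_mul' a b := by ext <;> simp only [mul_def] <;> ring
  map_zero' := rfl
  map_add' a b := by ext <;> simp only [add_def] <;> ring

def gen : Fin 4 → R14Model k :=
  ![⟨0, 1, 0, 0, 0, 0, 0, 0⟩, ⟨0, 0, 1, 0, 0, 0, 0, 0⟩, ⟨0, 0, 0, 1, 0, 0, 0, 0⟩,
    ⟨0, 0, 0, 0, 1, 0, 0, 0⟩]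

def quad (a b c : k) : R14Model k := ⟨0, 0, 0, 0, 0, a, b, c⟩

lemma mul_quad_eq_zero {y : R14Model k} (hy : y.const = 0) (a b c : k) : y * quad a b c = 0 := by
  ext <;> simp [mul_def, quad, zero_def, hy]

lemma quad_coords_of_mul_eq_quad {y w : R14Model k} (h0 : y.const = 0) (hv : y.v = 0)
    (hw : w.const = 0) {a b c : k} (h : w * y = quad a b c) :
    w.s * y.t + w.t * y.s = a ∧ w.s * y.u + w.u * y.s = b ∧ w.t * y.u + w.u * y.t = c := by
  have hst := congrArg st h
  have hsu := congrArg su h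
  have htu := congrArg tu h
  simp only [mul_def, quad, h0, hv, hw, mul_zero, zero_mul, add_zero, zero_add] at hst hsu htu
  exact ⟨hst, hsu, htu⟩

end R14Model

namespace R14

variable {k : Type*} [CommRing k]

noncomputable abbrev s : R14 k := Ideal.Quotient.mk (I14 k) (X 0)
noncomputable abbrev t : R14 k := Ideal.Quotient.mk (I14 k) (X 1)
noncomputable abbrev u : R14 k := Ideal.Quotient.mk (I14 k) (X 2)
noncomputable abbrev v : R14 k := Ideal.Quotient.mk (I14 k) (X 3)

section

variable (k)

lemma mk_eq_zero_of_mem_generators {p : MvPolynomial (Fin 4) k}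
    (hp : p ∈ ({X 0 ^ 2, X 0 * X 3, X 1 ^ 2, X 1 * X 3, X 2 ^ 2, X 2 * X 3,
      X 3 ^ 2 - X 0 * X 1 - X 0 * X 2} : Set (MvPolynomial (Fin 4) k))) :
    Ideal.Quotient.mk (I14 k) p = 0 :=
  Ideal.Quotient.eq_zero_iff_mem.2 (Ideal.subset_span hp)

lemma s_sq : s ^ 2 = (0 : R14 k) := by
  rw [← map_pow]; exact mk_eq_zero_of_mem_generators k (by simp)

lemma t_sq : t ^ 2 = (0 : R14 k) := by
  rw [← map_pow]; exact mk_eq_zero_of_mem_generators k (by simp)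

lemma u_sq : u ^ 2 = (0 : R14 k) := by
  rw [← map_pow]; exact mk_eq_zero_of_mem_generators k (by simp)

lemma s_mul_v : s * v = (0 : R14 k) := by
  rw [← map_mul]; exact mk_eq_zero_of_mem_generators k (by simp)

lemma t_mul_v : t * v = (0 : R14 k) := by
  rw [← map_mul]; exact mk_eq_zero_of_mem_generators k (by simp)

lemma u_mul_v : u * v = (0 : R14 k) := by
  rw [← map_mul]; exact mk_eq_zero_of_mem_generators k (by simp)

lemma v_sq : v ^ 2 = (s * t + s * u : R14 k) := by
  rw [← sub_eq_zero, sub_add_eq_sub_sub, ← map_pow, ← map_mul, ← map_mul, ← map_sub, ← map_sub]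
  exact mk_eq_zero_of_mem_generators k (by simp)

lemma s_mul_t_mul_u : s * t * u = (0 : R14 k) := by
  linear_combination v * u_mul_v k - s * u_sq k - u * v_sq k

end

noncomputable abbrev evalModel : MvPolynomial (Fin 4) k →+* R14Model k :=
  eval₂Hom R14Model.constHom R14Model.gen

lemma I14_le_ker_evalModel : I14 k ≤ RingHom.ker (evalModel (k := k)) := by
  refine Ideal.span_le.2 fun q hq => ?_
  simp only [Set.mem_insert_iff, Set.mem_singleton_iff] at hq
  rcases hq with rfl | rfl | rfl | rfl | rfl | rfl | rfl <;>
    ext <;> simp [R14Model.gen, pow_two, R14Model.mul_def, R14Model.add_def, R14Model.neg_def,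
      sub_eq_add_neg, R14Model.zero_def]

noncomputable def toModel : R14 k →+* R14Model k :=
  Ideal.Quotient.lift (I14 k) evalModel fun _ hp => RingHom.mem_ker.1 (I14_le_ker_evalModel hp)

lemma toModel_algebraMap (a : k) :
    toModel (algebraMap k (R14 k) a) = R14Model.constHom a := by
  rw [← Ideal.Quotient.mk_algebraMap, MvPolynomial.algebraMap_eq, toModel,
    Ideal.Quotient.lift_mk, eval₂Hom_C]

lemma toModel_mk_X (i : Fin 4) :
    toModel (Ideal.Quotient.mk (I14 k) (X i)) = R14Model.gen i := by
  rw [toModel, Ideal.Quotient.lift_mk, eval₂Hom_X']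

noncomputable def ofModel (z : R14Model k) : R14 k :=
  algebraMap k (R14 k) z.const + algebraMap k (R14 k) z.s * s + algebraMap k (R14 k) z.t * t +
    algebraMap k (R14 k) z.u * u + algebraMap k (R14 k) z.v * v +
    algebraMap k (R14 k) z.st * (s * t) + algebraMap k (R14 k) z.su * (s * u) +
    algebraMap k (R14 k) z.tu * (t * u)

lemma toModel_ofModel (z : R14Model k) : toModel (ofModel z) = z := by
  simp only [ofModel, map_add, map_mul, toModel_algebraMap, toModel_mk_X]
  ext <;> simp [R14Model.gen, R14Model.constHom, R14Model.mul_def, R14Model.add_def]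

lemma ofModel_add (z w : R14Model k) : ofModel (z + w) = ofModel z + ofModel w := by
  simp only [ofModel, R14Model.add_def, map_add]; ring

lemma ofModel_mul_gen (z : R14Model k) (i : Fin 4) :
    ofModel (z * R14Model.gen i) = ofModel z * Ideal.Quotient.mk (I14 k) (X i) := by
  fin_cases i <;>
    simp only [ofModel, R14Model.gen, R14Model.mul_def, Fin.zero_eta, Fin.mk_one, Fin.reduceFinMk,
      Matrix.cons_val, mul_zero, mul_one, add_zero, zero_add, map_zero, zero_mul] <;>
    set c := algebraMap k (R14 k)
  · linear_combination -(c z.s * s_sq k + c z.v * s_mul_v k + c z.st * t * s_sq k +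
      c z.su * u * s_sq k + c z.tu * s_mul_t_mul_u k)
  · linear_combination -(c z.t * t_sq k + c z.v * t_mul_v k + c z.st * s * t_sq k +
      c z.su * s_mul_t_mul_u k + c z.tu * u * t_sq k)
  · linear_combination -(c z.u * u_sq k + c z.v * u_mul_v k + c z.st * s_mul_t_mul_u k +
      c z.su * s * u_sq k + c z.tu * t * u_sq k)
  · linear_combination -(c z.s * s_mul_v k + c z.t * t_mul_v k + c z.u * u_mul_v k +
      c z.v * v_sq k + c z.st * t * s_mul_v k + c z.su * u * s_mul_v k + c z.tu * t * u_mul_v k)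

lemma ofModel_toModel (x : R14 k) : ofModel (toModel x) = x := by
  obtain ⟨p, rfl⟩ := Ideal.Quotient.mk_surjective x
  induction p using MvPolynomial.induction_on with
  | C a =>
    rw [← MvPolynomial.algebraMap_eq, Ideal.Quotient.mk_algebraMap, toModel_algebraMap]
    simp [ofModel, R14Model.constHom]
  | add p q hp hq => rw [map_add, map_add, ofModel_add, hp, hq]
  | mul_X p i hp => rw [map_mul, map_mul, toModel_mk_X, ofModel_mul_gen, hp]

noncomputable def equivModel : R14 k ≃+* R14Model k :=
  { toModel with invFun := ofModel, left_inv := ofModel_toModel, right_inv := toModel_ofModel }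

end R14

namespace R14Model

variable {k : Type*} [CommRing k] [IsDomain k]

lemma coords_of_mul_self_eq_zero {y : R14Model k} (h : y * y = 0) :
    y.const = 0 ∧ y.v = 0 ∧ 2 * y.t * y.u = 0 := by
  have h0 : y.const = 0 := mul_self_eq_zero.1 (congrArg const h)
  have hst := congrArg st h
  have hsu := congrArg su h
  have htu := congrArg tu h
  simp only [mul_def, zero_def, h0, mul_zero, zero_mul, add_zero, zero_add] at hst hsu htu
  refine ⟨h0, pow_eq_zero_iff (n := 4) (by norm_num) |>.1 ?_, by linear_combination htu⟩
  linear_combination y.v ^ 2 * hst - 2 * y.s * y.t * hsu + 2 * y.s ^ 2 * htu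

lemma false_of_mul_eq_quad_of_linear_eq_zero {y p r : R14Model k} (h0 : y.const = 0)
    (hs : y.s = 0) (ht : y.t = 0) (hu : y.u = 0) (hv : y.v = 0)
    (hp : p * y = quad 1 0 0) (hr : r * y = quad 0 0 1) : False := by
  have hp1 := congrArg st hp
  have hp2 := congrArg tu hp
  have hr1 := congrArg st hr
  have hr2 := congrArg tu hr
  simp only [mul_def, quad, h0, hs, ht, hu, hv, mul_zero, add_zero] at hp1 hp2 hr1 hr2
  exact one_ne_zero (α := k) (by
    linear_combination -(r.const * y.tu) * hp1 - hr2 + r.const * y.st * hp2)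

lemma const_eq_zero_of_mul_eq_quad {y p : R14Model k} (h0 : y.const = 0)
    (hlin : ¬(y.s = 0 ∧ y.t = 0 ∧ y.u = 0)) {a b c : k} (hp : p * y = quad a b c) :
    p.const = 0 := by
  have hs := congrArg R14Model.s hp
  have ht := congrArg R14Model.t hp
  have hu := congrArg R14Model.u hp
  simp only [mul_def, quad, h0, mul_zero, add_zero] at hs ht hu
  by_contra hp0
  exact hlin ⟨(mul_eq_zero.1 hs).resolve_left hp0, (mul_eq_zero.1 ht).resolve_left hp0,
    (mul_eq_zero.1 hu).resolve_left hp0⟩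

lemma false_of_mul_eq_quad_of_linear_ne_zero {y p q r : R14Model k} (h0 : y.const = 0)
    (hv : y.v = 0) (htu : 2 * y.t * y.u = 0) (hlin : ¬(y.s = 0 ∧ y.t = 0 ∧ y.u = 0))
    (hp : p * y = quad 1 0 0) (hq : q * y = quad 0 1 0) (hr : r * y = quad 0 0 1) : False := by
  obtain ⟨p1, p2, p3⟩ :=
    quad_coords_of_mul_eq_quad h0 hv (const_eq_zero_of_mul_eq_quad h0 hlin hp) hp
  obtain ⟨q1, q2, q3⟩ :=
    quad_coords_of_mul_eq_quad h0 hv (const_eq_zero_of_mul_eq_quad h0 hlin hq) hq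
  obtain ⟨r1, r2, r3⟩ :=
    quad_coords_of_mul_eq_quad h0 hv (const_eq_zero_of_mul_eq_quad h0 hlin hr) hr
  -- multiplication by `y` sends `span(s, t, u)` to `m²` by the matrix `N`
  set N : Matrix (Fin 3) (Fin 3) k := !![y.t, y.u, 0; y.s, 0, y.u; 0, y.s, y.t]
  have hN : N.det = 0 := by
    simp only [N, Matrix.det_fin_three, Matrix.of_apply, Matrix.cons_val', Matrix.cons_val_zero,
      Matrix.cons_val_fin_one, Matrix.cons_val_one, Matrix.cons_val, mul_zero, zero_mul, zero_sub,
      add_zero, sub_zero]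
    linear_combination -y.s * htu
  have hPN : !![p.s, p.t, p.u; q.s, q.t, q.u; r.s, r.t, r.u] * N = 1 := by
    rw [Matrix.mul_fin_three, Matrix.one_fin_three]
    simp only [mul_zero, add_zero, zero_add, p1, p2, p3, q1, q2, q3, r1, r2, r3]
  have := congrArg Matrix.det hPN
  rw [Matrix.det_mul, hN, mul_zero, Matrix.det_one] at this
  exact zero_ne_one this

theorem annIdeal_ne_span_singleton (y : R14Model k) :
    annIdeal (R14Model k) y ≠ Ideal.span {y} := by
  intro h
  have hmul : ∀ z, y * z = 0 → ∃ c, c * y = z := fun z hz =>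
    Ideal.mem_span_singleton'.1 (h ▸ mem_annIdeal.2 hz)
  have hyy : y * y = 0 := mem_annIdeal.1 (h ▸ Ideal.mem_span_singleton_self y)
  obtain ⟨h0, hv, htu⟩ := coords_of_mul_self_eq_zero hyy
  obtain ⟨p, hp⟩ := hmul _ (mul_quad_eq_zero h0 1 0 0)
  obtain ⟨q, hq⟩ := hmul _ (mul_quad_eq_zero h0 0 1 0)
  obtain ⟨r, hr⟩ := hmul _ (mul_quad_eq_zero h0 0 0 1)
  by_cases hlin : y.s = 0 ∧ y.t = 0 ∧ y.u = 0
  · exact false_of_mul_eq_quad_of_linear_eq_zero h0 hlin.1 hlin.2.1 hlin.2.2 hv hp hr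
  · exact false_of_mul_eq_quad_of_linear_ne_zero h0 hv htu hlin hp hq hr

end R14Model

/-- for any field `k`, in
`R = k[s,t,u,v]/(s², sv, t², tv, u², uv, v² - st - su)` there is no element `x`
with `ann(x) = (x)`. -/
theorem stmt15 (k : Type u) [Field k] :
    ¬ ∃ x : R14 k, annIdeal (R14 k) x = Ideal.span {x} := by
  rintro ⟨x, hx⟩
  exact R14Model.annIdeal_ne_span_singleton _ (annIdeal_eq_span_singleton_map R14.equivModel hx)
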